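/- arXiv:2412.10802 — 4 statements merged into one kernel-verified Lean document; each statement's English description precedes it below -/
import Mathlib

section
/- Let m ≤ n be natural numbers with m ≥ 1. Then the cutting map Sym(n) → Sym(m), σ ↦ σ↓Sym(m), is a uniform 2(n−m)/m-homomorphism: for all σ, τ ∈ Sym(n), d_m((στ)↓Sym(m), (σ↓Sym(m))·(τ↓Sym(m))) ≤ 2(n−m)/m. -/
/-!
If `τ` sends `i ≤ m` into `{1,…,m}` and `σ` sends `τ i` there as well, then all three cuttings
take a single step at `i`, so `(στ)↓Sym(m)` and `σ↓Sym(m) · τ↓Sym(m)` agree at `i`. Each of the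
two failures is witnessed injectively by a point of `{m+1,…,n}`, so the two permutations differ
at no more than `2(n-m)` points.
-/

open Filter Equiv Set

namespace SymPaper

/-- The normalized Hamming distance on permutations of `Fin N`:
`d_N(σ,τ) = |{i : σ i ≠ τ i}| / N`. -/
noncomputable def hd {N : ℕ} (σ τ : Equiv.Perm (Fin N)) : ℝ :=
  ((Finset.univ.filter fun i => σ i ≠ τ i).card : ℝ) / N

lemma hd_nonneg {N : ℕ} (σ τ : Equiv.Perm (Fin N)) : 0 ≤ hd σ τ :=
  div_nonneg (Nat.cast_nonneg _) (Nat.cast_nonneg _)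

lemma hd_self {N : ℕ} (σ : Equiv.Perm (Fin N)) : hd σ σ = 0 := by
  simp [hd]

lemma hd_filter_eq_support {N : ℕ} (σ τ : Equiv.Perm (Fin N)) :
    (Finset.univ.filter fun i => σ i ≠ τ i) = (σ⁻¹ * τ).support := by
  ext i
  simp only [Finset.mem_filter, Finset.mem_univ, true_and, Equiv.Perm.mem_support,
    Equiv.Perm.mul_apply, ne_eq, Equiv.Perm.inv_eq_iff_eq]
  exact not_congr ⟨fun h => h.symm, fun h => h.symm⟩

lemma hd_one {N : ℕ} (σ : Equiv.Perm (Fin N)) :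
    hd σ 1 = (σ.support.card : ℝ) / N := by
  unfold hd
  rw [hd_filter_eq_support, mul_one, Equiv.Perm.support_inv]

lemma hd_mul_one_le {N : ℕ} (σ τ : Equiv.Perm (Fin N)) :
    hd (σ * τ) 1 ≤ hd σ 1 + hd τ 1 := by
  rcases Nat.eq_zero_or_pos N with h0 | hpos
  · subst h0; simp [hd]
  · have hN : (0 : ℝ) < N := by exact_mod_cast hpos
    rw [hd_one, hd_one, hd_one, ← add_div]
    rw [div_le_div_iff_of_pos_right hN]
    have h1 : ((σ * τ).support).card ≤ (σ.support ⊔ τ.support).card :=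
      Finset.card_le_card (Equiv.Perm.support_mul_le σ τ)
    have h2 : (σ.support ⊔ τ.support).card ≤ σ.support.card + τ.support.card :=
      Finset.card_union_le _ _
    exact_mod_cast le_trans h1 h2

lemma hd_inv_one {N : ℕ} (σ : Equiv.Perm (Fin N)) : hd σ⁻¹ 1 = hd σ 1 := by
  rw [hd_one, hd_one, Equiv.Perm.support_inv]

lemma hd_conj_one {N : ℕ} (g σ : Equiv.Perm (Fin N)) :
    hd (g * σ * g⁻¹) 1 = hd σ 1 := by
  rw [hd_one, hd_one, Equiv.Perm.support_conj, Finset.card_map]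

/-- The normal subgroup of elements of `∏ n, Sym(k n)` that tend to the identity
along the filter `F`. -/
def symNull (k : ℕ → ℕ) (F : Filter ℕ) : Subgroup (∀ n, Equiv.Perm (Fin (k n))) where
  carrier := {a | Filter.Tendsto (fun n => hd (a n) 1) F (nhds 0)}
  one_mem' := by
    simpa [hd_self] using (tendsto_const_nhds : Filter.Tendsto (fun _ : ℕ => (0:ℝ)) F (nhds 0))
  mul_mem' := by
    intro a b ha hb
    refine squeeze_zero (fun n => hd_nonneg _ _) (fun n => ?_) (by simpa using ha.add hb)
    exact hd_mul_one_le (a n) (b n)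
  inv_mem' := by
    intro a ha
    simpa [hd_inv_one] using ha

instance symNull_normal (k : ℕ → ℕ) (F : Filter ℕ) : (symNull k F).Normal := by
  constructor
  intro a ha g
  show Filter.Tendsto (fun n => hd ((g * a * g⁻¹) n) 1) F (nhds 0)
  have ha' : Filter.Tendsto (fun n => hd (a n) 1) F (nhds 0) := ha
  simpa [hd_conj_one] using ha'

/-- The metric reduced product `Sym[(k n)ₙ]`. -/
abbrev SymRP (k : ℕ → ℕ) : Type :=
  (∀ n, Equiv.Perm (Fin (k n))) ⧸ symNull k Filter.atTop

/-- The metric ultraproduct `∏ₙ Sym(k n) / U`. -/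
abbrev SymUP (k : ℕ → ℕ) (U : Ultrafilter ℕ) : Type :=
  (∀ n, Equiv.Perm (Fin (k n))) ⧸ symNull k (U : Filter ℕ)

/-- Class of a sequence in the metric reduced product. -/
def mkRP {k : ℕ → ℕ} (a : ∀ n, Equiv.Perm (Fin (k n))) : SymRP k :=
  QuotientGroup.mk a

/-- Class of a sequence in the metric ultraproduct. -/
def mkUP {k : ℕ → ℕ} (U : Ultrafilter ℕ) (a : ∀ n, Equiv.Perm (Fin (k n))) : SymUP k U :=
  QuotientGroup.mk a

section CutLift

lemma cut_exists {n : ℕ} (σ : Equiv.Perm (Fin n)) {m : ℕ} (h : m ≤ n) (i : Fin m) :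
    ∃ kk : ℕ, 1 ≤ kk ∧ (((σ ^ kk) (Fin.castLE h i) : Fin n) : ℕ) < m := by
  refine ⟨orderOf σ, orderOf_pos σ, ?_⟩
  rw [pow_orderOf_eq_one]
  simpa using i.2

/-- The underlying function of the cutting `σ ↓ Sym(m)`: it sends `i < m` to
`σ^k i` for the least `k ≥ 1` with `σ^k i < m`. -/
noncomputable def cutFun {n : ℕ} (σ : Equiv.Perm (Fin n)) {m : ℕ} (h : m ≤ n) (i : Fin m) :
    Fin m :=
  ⟨(((σ ^ (Nat.find (cut_exists σ h i))) (Fin.castLE h i) : Fin n) : ℕ),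
    (Nat.find_spec (cut_exists σ h i)).2⟩

lemma cutFun_injective {n : ℕ} (σ : Equiv.Perm (Fin n)) {m : ℕ} (h : m ≤ n) :
    Function.Injective (cutFun σ h) := by
  have key : ∀ i j : Fin m,
      Nat.find (cut_exists σ h i) ≤ Nat.find (cut_exists σ h j) →
      cutFun σ h i = cutFun σ h j → i = j := by
    intro i j hle hij
    set ki := Nat.find (cut_exists σ h i) with hki
    set kj := Nat.find (cut_exists σ h j) with hkj
    have hv : ((cutFun σ h i : Fin m) : ℕ) = ((cutFun σ h j : Fin m) : ℕ) :=
      congrArg Fin.val hij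
    have hval : (σ ^ ki) (Fin.castLE h i) = (σ ^ kj) (Fin.castLE h j) := Fin.ext hv
    have hki1 : 1 ≤ ki := (Nat.find_spec (cut_exists σ h i)).1
    have hkj1 : 1 ≤ kj := (Nat.find_spec (cut_exists σ h j)).1
    have hpow : σ ^ ki * σ ^ (kj - ki) = σ ^ kj := by
      rw [← pow_add, Nat.add_sub_cancel' hle]
    have h2 : (σ ^ (kj - ki)) (Fin.castLE h j) = Fin.castLE h i := by
      apply (σ ^ ki).injective
      calc (σ ^ ki) ((σ ^ (kj - ki)) (Fin.castLE h j))
          = (σ ^ ki * σ ^ (kj - ki)) (Fin.castLE h j) := rfl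
        _ = (σ ^ kj) (Fin.castLE h j) := by rw [hpow]
        _ = (σ ^ ki) (Fin.castLE h i) := hval.symm
    by_cases hzero : kj - ki = 0
    · have hkeq : ki = kj := le_antisymm hle (Nat.sub_eq_zero_iff_le.mp hzero)
      have : Fin.castLE h i = Fin.castLE h j := by
        apply (σ ^ kj).injective
        rw [← hval, hkeq]
      exact Fin.castLE_injective h this
    · exfalso
      have hlt : kj - ki < kj := Nat.sub_lt (lt_of_lt_of_le Nat.one_pos hkj1) hki1
      have := Nat.find_min (cut_exists σ h j) hlt
      apply this
      refine ⟨Nat.one_le_iff_ne_zero.mpr hzero, ?_⟩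
      rw [h2]
      simpa using i.2
  intro i j hij
  rcases le_total (Nat.find (cut_exists σ h i)) (Nat.find (cut_exists σ h j)) with hle | hle
  · exact key i j hle hij
  · exact (key j i hle hij.symm).symm

/-- Cutting `σ ↓ Sym(m)` of a permutation `σ ∈ Sym(n)` for `m ≤ n`. -/
noncomputable def cutPerm {n : ℕ} (σ : Equiv.Perm (Fin n)) {m : ℕ} (h : m ≤ n) :
    Equiv.Perm (Fin m) :=
  Equiv.ofBijective (cutFun σ h) (Finite.injective_iff_bijective.mp (cutFun_injective σ h))

/-- Lifting `τ ↑ Sym(n)` of a permutation `τ ∈ Sym(m)` for `m ≤ n`: it acts as `τ` on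
`{0,…,m-1}` and fixes the remaining points. -/
noncomputable def liftPerm {m : ℕ} (τ : Equiv.Perm (Fin m)) {n : ℕ} (h : m ≤ n) :
    Equiv.Perm (Fin n) :=
  τ.viaFintypeEmbedding (Fin.castLEEmb h)

/-- `σ ↕ Sym(n)`: lifting if `m ≤ n`, cutting if `n ≤ m`. -/
noncomputable def updown {m : ℕ} (σ : Equiv.Perm (Fin m)) (n : ℕ) : Equiv.Perm (Fin n) :=
  if h : m ≤ n then liftPerm σ h else cutPerm σ (le_of_not_ge h)

end CutLift

/-- An almost permutation of `ℕ`: a map with cofinite range which is injective on a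
cofinite set. -/
def AlmostPerm (f : ℕ → ℕ) : Prop :=
  (Set.range f)ᶜ.Finite ∧ ∃ S : Set ℕ, Sᶜ.Finite ∧ Set.InjOn f S

/-- `limsup` of a real sequence along an infinite set of indices. -/
noncomputable def limsupOn (S : Set ℕ) (x : ℕ → ℝ) : ℝ :=
  Filter.limsup x (Filter.atTop ⊓ Filter.principal S)

/-- Almost equality: the sets where two sets of naturals differ is finite. -/
instance finSetoid : Setoid (Set ℕ) where
  r S T := (symmDiff S T).Finite
  iseqv := by
    refine ⟨fun S => by simp [symmDiff_self], fun h => by rwa [symmDiff_comm], ?_⟩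
    intro S T V h1 h2
    exact (h1.union h2).subset (symmDiff_triangle S T V)

/-- The Boolean algebra `P(ℕ)/Fin`. -/
def PFin : Type := Quotient finSetoid

/-- Class of a subset of `ℕ` in `P(ℕ)/Fin`. -/
def PFin.mk (S : Set ℕ) : PFin := Quotient.mk finSetoid S

/-- Join in `P(ℕ)/Fin`. -/
def PFin.sup : PFin → PFin → PFin :=
  Quotient.map₂ (· ∪ ·) (by
    intro S S' h1 T T' h2
    refine Set.Finite.subset (h1.union h2) ?_
    intro x hx
    simp only [Set.mem_symmDiff, Set.mem_union] at *
    tauto)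

/-- Complement in `P(ℕ)/Fin`. -/
def PFin.compl : PFin → PFin :=
  Quotient.map (·ᶜ) (by
    intro S T h
    show (symmDiff Sᶜ Tᶜ).Finite
    rwa [compl_symmDiff_compl])

/-- Todorčević's open coloring axiom `OCA`. -/
def OCA : Prop :=
  ∀ (X : Type) [MetricSpace X] [TopologicalSpace.SeparableSpace X],
    ∀ K : Set (X × X), IsOpen K → (∀ x y : X, (x, y) ∈ K → (y, x) ∈ K) →
      (∃ Y : Set X, ¬ Y.Countable ∧ ∀ x ∈ Y, ∀ y ∈ Y, x ≠ y → (x, y) ∈ K) ∨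
      (∃ c : ℕ → Set X, (⋃ n, c n) = Set.univ ∧
        ∀ n, ∀ x ∈ c n, ∀ y ∈ c n, x ≠ y → (x, y) ∉ K)

/-- Martin's axiom for σ-linked partial orders (for `ℵ₁` many dense sets). -/
def MAσlinked : Prop :=
  ∀ (P : Type) [PartialOrder P],
    (∃ Ps : ℕ → Set P, (⋃ n, Ps n) = Set.univ ∧
      ∀ n, ∀ p ∈ Ps n, ∀ q ∈ Ps n, ∃ r : P, r ≤ p ∧ r ≤ q) →
    ∀ (ι : Type) (D : ι → Set P), Cardinal.mk ι ≤ Cardinal.aleph 1 →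
      (∀ i, ∀ p : P, ∃ q ∈ D i, q ≤ p) →
      ∃ G : Set P,
        (∀ p ∈ G, ∀ q ∈ G, ∃ r ∈ G, r ≤ p ∧ r ≤ q) ∧
        (∀ p ∈ G, ∀ q : P, p ≤ q → q ∈ G) ∧
        ∀ i, (G ∩ D i).Nonempty

lemma castLE_cutPerm_of_lt {n m : ℕ} (σ : Equiv.Perm (Fin n)) (h : m ≤ n) (i : Fin m)
    (hlt : ((σ (Fin.castLE h i) : Fin n) : ℕ) < m) :
    Fin.castLE h (cutPerm σ h i) = σ (Fin.castLE h i) := by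
  have hfind : Nat.find (cut_exists σ h i) = 1 :=
    le_antisymm (Nat.find_le ⟨le_rfl, by simpa using hlt⟩) (Nat.find_spec (cut_exists σ h i)).1
  ext
  change (((σ ^ Nat.find (cut_exists σ h i)) (Fin.castLE h i) : Fin n) : ℕ) = _
  rw [hfind, pow_one]

lemma cutPerm_mul_apply_of_lt {n m : ℕ} (σ τ : Equiv.Perm (Fin n)) (h : m ≤ n) (i : Fin m)
    (hτ : ((τ (Fin.castLE h i) : Fin n) : ℕ) < m)
    (hσ : ((σ (Fin.castLE h (cutPerm τ h i)) : Fin n) : ℕ) < m) :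
    cutPerm (σ * τ) h i = cutPerm σ h (cutPerm τ h i) := by
  have hτ' := castLE_cutPerm_of_lt τ h i hτ
  rw [hτ'] at hσ
  apply Fin.castLE_injective h
  rw [castLE_cutPerm_of_lt σ h _ (by rwa [hτ']), hτ', castLE_cutPerm_of_lt (σ * τ) h i hσ,
    Equiv.Perm.mul_apply]

lemma card_filter_le_val_le_sub {α : Type*} [Fintype α] {n : ℕ} (f : α → Fin n)
    (hf : Function.Injective f) (m : ℕ) :
    (Finset.univ.filter fun a => m ≤ (f a : ℕ)).card ≤ n - m := by
  simpa using Finset.card_le_card_of_injOn (fun a => (f a : ℕ)) (t := Finset.Ico m n)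
    (fun a ha => Finset.mem_Ico.mpr ⟨(Finset.mem_filter.mp ha).2, (f a).2⟩)
    (fun a _ b _ hab => hf (Fin.ext hab))

lemma card_cutPerm_mul_ne_le {n m : ℕ} (σ τ : Equiv.Perm (Fin n)) (h : m ≤ n) :
    (Finset.univ.filter fun i =>
      cutPerm (σ * τ) h i ≠ (cutPerm σ h * cutPerm τ h) i).card ≤ 2 * (n - m) := by
  set A := Finset.univ.filter fun i : Fin m => m ≤ ((τ (Fin.castLE h i) : Fin n) : ℕ)
  set B := Finset.univ.filter fun i : Fin m =>
    m ≤ ((σ (Fin.castLE h (cutPerm τ h i)) : Fin n) : ℕ)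
  have hsub : (Finset.univ.filter fun i =>
      cutPerm (σ * τ) h i ≠ (cutPerm σ h * cutPerm τ h) i) ⊆ A ∪ B := by
    intro i hi
    by_contra hAB
    simp only [A, B, Finset.mem_union, Finset.mem_filter, Finset.mem_univ, true_and, not_or,
      not_le] at hAB
    exact (Finset.mem_filter.mp hi).2 (cutPerm_mul_apply_of_lt σ τ h i hAB.1 hAB.2)
  have hA : A.card ≤ n - m :=
    card_filter_le_val_le_sub _ (τ.injective.comp (Fin.castLE_injective h)) m
  have hB : B.card ≤ n - m :=
    card_filter_le_val_le_sub _
      (σ.injective.comp ((Fin.castLE_injective h).comp (cutPerm τ h).injective)) m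
  calc _ ≤ (A ∪ B).card := Finset.card_le_card hsub
    _ ≤ A.card + B.card := Finset.card_union_le A B
    _ ≤ 2 * (n - m) := by omega

theorem cutPerm_uniform_quasimorphism_general (m n : ℕ) (hmn : m ≤ n)
    (σ τ : Equiv.Perm (Fin n)) :
    hd (cutPerm (σ * τ) hmn) (cutPerm σ hmn * cutPerm τ hmn) ≤ 2 * ((n : ℝ) - m) / m := by
  have hcard : ((Finset.univ.filter fun i =>
      cutPerm (σ * τ) hmn i ≠ (cutPerm σ hmn * cutPerm τ hmn) i).card : ℝ) ≤
      2 * ((n : ℝ) - m) := by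
    rw [← Nat.cast_sub hmn]
    exact_mod_cast card_cutPerm_mul_ne_le σ τ hmn
  exact div_le_div_of_nonneg_right hcard (Nat.cast_nonneg m)

/-- For `1 ≤ m ≤ n`, the cutting map `Sym(n) → Sym(m)` is a uniform
`2(n-m)/m`-homomorphism. -/
theorem cutPerm_uniform_quasimorphism (m n : ℕ) (hm : 1 ≤ m) (hmn : m ≤ n)
    (σ τ : Equiv.Perm (Fin n)) :
    hd (cutPerm (σ * τ) hmn) (cutPerm σ hmn * cutPerm τ hmn) ≤ 2 * ((n : ℝ) - m) / m :=
  cutPerm_uniform_quasimorphism_general m n hmn σ τ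

end SymPaper
end

section
/- Let n ≥ 1 and m ≥ 1 be natural numbers, δ ∈ [0,1] a real number, and φ : Sym(n) → Sym(m) a map such that for every σ ∈ Sym(m) there exists τ ∈ Sym(n) with d_m(φ(τ), σ) ≤ δ. Then m! ≤ n! · (⌊δm⌋)! · C(m, ⌊δm⌋), and consequently m − ⌊δm⌋ ≤ n. -/
open Filter Equiv Set

namespace SymPaper

/-!
The ball of radius `δ` around `ρ` in `Sym(m)` is `ρ` times the set of permutations moving at most
`k = ⌊δm⌋` points; each of those has its support inside some `k`-set, so there are at most
`C(m,k) · k!` of them. The `n!` balls around the image of `φ` cover `Sym(m)`, whence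
`m! ≤ n! · C(m,k) · k!`. As `C(m,k) · k! · (m-k)! = m!`, this says `(m-k)! ≤ n!`, so `m - k ≤ n`.
-/

open Finset

section PermCounting

variable {α : Type*} [Fintype α] [DecidableEq α]

theorem card_filter_card_support_le {k : ℕ} (hk : k ≤ Fintype.card α) :
    #{π : Perm α | #π.support ≤ k} ≤ (Fintype.card α).choose k * k.factorial := by
  calc #{π : Perm α | #π.support ≤ k}
      ≤ #((univ.powersetCard k).biUnion permsOfFinset) := by
        refine card_le_card fun π hπ => ?_
        obtain ⟨S, hπS, -, hS⟩ :=
          exists_subsuperset_card_eq (subset_univ _) (mem_filter.1 hπ).2 (by simpa using hk)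
        exact mem_biUnion.2 ⟨S, mem_powersetCard.2 ⟨subset_univ _, hS⟩,
          mem_perms_of_finset_iff.2 fun hx => hπS (Perm.mem_support.2 hx)⟩
    _ ≤ #(univ.powersetCard k) * k.factorial :=
        card_biUnion_le_card_mul _ _ _ fun S hS => by
          rw [card_perms_of_finset, (mem_powersetCard.1 hS).2]
    _ = (Fintype.card α).choose k * k.factorial := by rw [card_powersetCard, card_univ]

end PermCounting

section HammingBall

variable {N : ℕ}

theorem floor_mul_le_of_le_one {δ : ℝ} (hδ : δ ≤ 1) : ⌊δ * N⌋₊ ≤ N :=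
  Nat.floor_le_of_le (mul_le_of_le_one_left (Nat.cast_nonneg N) hδ)

theorem hd_mul_eq_card_support (σ τ : Perm (Fin N)) : hd σ τ * N = #(σ⁻¹ * τ).support := by
  rcases N.eq_zero_or_pos with rfl | hN
  · simp [Finset.eq_empty_of_isEmpty]
  · rw [hd, hd_filter_eq_support, div_mul_cancel₀ _ (by positivity)]

theorem card_support_inv_mul_le_floor {σ τ : Perm (Fin N)} {δ : ℝ} (h : hd σ τ ≤ δ) :
    #(σ⁻¹ * τ).support ≤ ⌊δ * N⌋₊ :=
  Nat.le_floor <| hd_mul_eq_card_support σ τ ▸ mul_le_mul_of_nonneg_right h (Nat.cast_nonneg N)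

theorem card_filter_hd_le (ρ : Perm (Fin N)) {δ : ℝ} (hδ : δ ≤ 1) :
    #{σ | hd ρ σ ≤ δ} ≤ N.choose ⌊δ * N⌋₊ * ⌊δ * N⌋₊.factorial := by
  have hk : ⌊δ * N⌋₊ ≤ Fintype.card (Fin N) :=
    (Fintype.card_fin N).symm ▸ floor_mul_le_of_le_one hδ
  refine (card_le_card_of_injOn (ρ⁻¹ * ·) (fun σ hσ => ?_) fun σ _ τ _ => mul_left_cancel).trans
    ((card_filter_card_support_le hk).trans_eq (by rw [Fintype.card_fin]))
  simp only [Finset.mem_coe, mem_filter, Finset.mem_univ, true_and] at hσ ⊢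
  exact card_support_inv_mul_le_floor hσ

end HammingBall

theorem factorial_le_of_forall_exists_hd_le {n m : ℕ} {δ : ℝ} (hδ : δ ≤ 1)
    (φ : Perm (Fin n) → Perm (Fin m)) (hsurj : ∀ σ, ∃ τ, hd (φ τ) σ ≤ δ) :
    m.factorial ≤ n.factorial * (m.choose ⌊δ * m⌋₊ * ⌊δ * m⌋₊.factorial) := by
  calc m.factorial = #(univ : Finset (Perm (Fin m))) := by simp [Fintype.card_perm]
    _ ≤ #(univ.biUnion fun τ => {σ | hd (φ τ) σ ≤ δ}) := by
        refine card_le_card fun σ _ => ?_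
        simpa using hsurj σ
    _ ≤ #(univ : Finset (Perm (Fin n))) * (m.choose ⌊δ * m⌋₊ * ⌊δ * m⌋₊.factorial) :=
        card_biUnion_le_card_mul _ _ _ fun τ _ => card_filter_hd_le (φ τ) hδ
    _ = n.factorial * (m.choose ⌊δ * m⌋₊ * ⌊δ * m⌋₊.factorial) := by simp [Fintype.card_perm]

theorem sub_le_of_factorial_le_mul {n m k : ℕ} (hn : 1 ≤ n) (hk : k ≤ m)
    (h : m.factorial ≤ n.factorial * (m.choose k * k.factorial)) : m - k ≤ n := by
  have hfact : (m - k).factorial ≤ n.factorial := by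
    refine Nat.le_of_mul_le_mul_right ?_ (mul_pos (Nat.choose_pos hk) (Nat.factorial_pos k))
    rwa [mul_comm, Nat.choose_mul_factorial_mul_factorial hk]
  by_contra! hlt
  exact hfact.not_gt ((Nat.factorial_lt hn).2 hlt)

theorem almost_surjective_factorial_bound_general (n m : ℕ) (hn : 1 ≤ n)
    (δ : ℝ) (h1 : δ ≤ 1)
    (φ : Equiv.Perm (Fin n) → Equiv.Perm (Fin m))
    (hsurj : ∀ σ : Equiv.Perm (Fin m), ∃ τ, hd (φ τ) σ ≤ δ) :
    m.factorial ≤ n.factorial * (Nat.floor (δ * m)).factorial * m.choose (Nat.floor (δ * m)) ∧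
      m - Nat.floor (δ * m) ≤ n := by
  have hbound := factorial_le_of_forall_exists_hd_le h1 φ hsurj
  exact ⟨hbound.trans_eq (by ring),
    sub_le_of_factorial_le_mul hn (floor_mul_le_of_le_one h1) hbound⟩

/-- if `φ : Sym(n) → Sym(m)` is `δ`-almost surjective then
`m! ≤ n!·⌊δm⌋!·C(m,⌊δm⌋)`, and consequently `m - ⌊δm⌋ ≤ n`. -/
theorem almost_surjective_factorial_bound (n m : ℕ) (hn : 1 ≤ n) (hm : 1 ≤ m)
    (δ : ℝ) (h0 : 0 ≤ δ) (h1 : δ ≤ 1)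
    (φ : Equiv.Perm (Fin n) → Equiv.Perm (Fin m))
    (hsurj : ∀ σ : Equiv.Perm (Fin m), ∃ τ, hd (φ τ) σ ≤ δ) :
    m.factorial ≤ n.factorial * (Nat.floor (δ * m)).factorial * m.choose (Nat.floor (δ * m)) ∧
      m - Nat.floor (δ * m) ≤ n :=
  almost_surjective_factorial_bound_general n m hn δ h1 φ hsurj

end SymPaper
end

section
/- Let (k_n)_n and (l_n)_n be sequences of natural numbers with lim_n k_n = lim_n l_n = ∞, and let φ : Sym[(k_n)_n] → Sym[(l_n)_n] be a group isomorphism. Then there exists an automorphism θ of the Boolean algebra P(ℕ)/Fin (which sends classes of infinite sets to classes of infinite sets) such that for all (a_n)_n, (b_n)_n ∈ ∏_n Sym(k_n), all (a'_n)_n, (b'_n)_n ∈ ∏_n Sym(l_n) with φ([(a_n)_n]) = [(a'_n)_n] and φ([(b_n)_n]) = [(b'_n)_n], every infinite S ⊆ ℕ, and every T ⊆ ℕ whose class equals θ([S]): limsup_{n ∈ S} d_{k_n}(a_n, b_n) = 0 if and only if limsup_{n ∈ T} d_{l_n}(a'_n, b'_n) = 0. -/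
open Filter Equiv Set

/-!
For `S ⊆ ℕ` let `N_S ≤ Sym[k]` consist of the classes of sequences tending to the identity along
`S`. The subgroups `N_S` and `N_Sᶜ` are normal and complementary, hence commute elementwise, and
`S ↦ N_S` is injective modulo finite sets (full cycles along an infinite set are not null there).

The heart of the argument is that `φ` maps `N_S` onto some `N_T`. Write a preimage of the sequence
of full cycles as `p q` with `p ∈ N_S`, `q ∈ N_Sᶜ`, and let `T` be where (a representative of)
`φ q` is far from the identity. For `a ∈ N_S`, every conjugate of `φ a` commutes with `φ q`; since
suitable conjugates of two permutations far from the identity have a commutator far from the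
identity (a counting argument), `φ a` is null along `T`. Symmetrically `φ (N_Sᶜ) ≤ N_Tᶜ`, and
complementarity turns both inclusions into equalities. So `[S] ↦ [T]` is an automorphism of
`P(ℕ)/Fin`, and `limsup_{n ∈ S} d(a_n, b_n) = 0` says exactly that `[a⁻¹ b] ∈ N_S`.
-/

lemma Finset.exists_embedding_forall_mem {α ι : Type*} [Fintype ι] (s : Finset α)
    (h : Fintype.card ι ≤ s.card) : ∃ f : ι ↪ α, ∀ i, f i ∈ s :=
  let ⟨f, hf⟩ := Function.Embedding.exists_of_card_le_finset h
  ⟨f, fun i => hf (Set.mem_range_self i)⟩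

namespace Equiv.Perm

open scoped commutatorElement

variable {α : Type*}

lemma exists_subset_forall_apply_notMem [DecidableEq α] (σ : Perm α) (M : Finset α)
    (hM : ∀ a ∈ M, σ a ≠ a) : ∃ A ⊆ M, (∀ a ∈ A, σ a ∉ A) ∧ M.card ≤ 3 * A.card := by
  induction M using Finset.strongInduction with
  | _ M ih =>
    rcases M.eq_empty_or_nonempty with rfl | ⟨a, ha⟩
    · exact ⟨∅, by simp⟩
    -- removing the three points `σ⁻¹ a, a, σ a` lets `a` be added to the set built on the rest
    set R : Finset α := {a, σ a, σ⁻¹ a}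
    have haR : a ∉ M \ R := by simp [R]
    obtain ⟨A, hAM, hA, hcard⟩ :=
      ih (M \ R) ((Finset.ssubset_iff_of_subset Finset.sdiff_subset).mpr ⟨a, ha, haR⟩)
        fun b hb => hM b (Finset.mem_sdiff.mp hb).1
    have hRA : ∀ b ∈ A, b ∉ R := fun b hb => (Finset.mem_sdiff.mp (hAM hb)).2
    refine ⟨insert a A, Finset.insert_subset ha (hAM.trans Finset.sdiff_subset), ?_, ?_⟩
    · simp only [Finset.mem_insert, forall_eq_or_imp, not_or]
      refine ⟨⟨hM a ha, fun h => hRA _ h (by simp [R])⟩, fun b hb => ⟨fun h => ?_, hA b hb⟩⟩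
      exact hRA b hb (by simp [R, ← h])
    · have hR : R.card ≤ 3 := Finset.card_le_three
      have := Finset.card_le_card_sdiff_add_card (s := M) (t := R)
      rw [Finset.card_insert_of_notMem fun h => haR (hAM h)]
      omega

lemma exists_conj_apply_eq [Finite α] {ι : Type*} [Finite ι] (x : Perm α) {a src tgt : ι → α}
    (ha : Function.Injective a) (hxa : ∀ i j, x (a i) ≠ a j) (hsrc : Function.Injective src)
    (htgt : Function.Injective tgt) (hst : ∀ i j, src i ≠ tgt j) :
    ∃ g : Perm α, ∀ i, (g * x * g⁻¹) (src i) = tgt i := by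
  obtain ⟨g, hg⟩ := exists_extending_pair (Sum.elim a (x ∘ a)) (Sum.elim src tgt)
    (ha.sumElim (x.injective.comp ha) fun i j h => hxa j i h.symm) (hsrc.sumElim htgt hst)
  refine ⟨g, fun i => ?_⟩
  have hga : g (a i) = src i := hg (.inl i)
  have hgx : g (x (a i)) = tgt i := hg (.inr i)
  rw [← hga]
  simpa using hgx

lemma card_le_card_support_commutator [Fintype α] [DecidableEq α] {ι : Type*} [Fintype ι]
    (x y : Perm α) {b : ι → α} (hb : Function.Injective b)
    (hxy : ∀ i, x (y (b i)) ≠ y (x (b i))) : Fintype.card ι ≤ ⁅x, y⁆.support.card := by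
  have hmem : ∀ i, y (x (b i)) ∈ ⁅x, y⁆.support := fun i => by
    simpa [commutatorElement_def, Perm.mul_apply] using hxy i
  simpa using Finset.card_le_card_of_injOn (s := Finset.univ) _ (fun i _ => hmem i)
    ((y.injective.comp (x.injective.comp hb)).injOn)

lemma exists_embedding_apply_ne [Fintype α] [DecidableEq α] {ι : Type*} [Fintype ι]
    (σ : Perm α) (h : 3 * Fintype.card ι ≤ σ.support.card) :
    ∃ a : ι ↪ α, ∀ i j, σ (a i) ≠ a j := by
  obtain ⟨A, -, hA, hcard⟩ :=
    σ.exists_subset_forall_apply_notMem σ.support fun _ => mem_support.mp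
  obtain ⟨a, ha⟩ := A.exists_embedding_forall_mem (ι := ι) (by omega)
  exact ⟨a, fun i j h => hA _ (ha i) (h ▸ ha j)⟩

/-- A conjugate of `x` is made to send `b i ↦ c i` and `y (b i) ↦ d i` with `d i ≠ y (c i)`,
for `t` points `b i` that `y` moves off the set of all `b j`. -/
lemma exists_conj_card_support_commutator_ge [Fintype α] [DecidableEq α] (x y : Perm α) {t : ℕ}
    (hx : 6 * t ≤ x.support.card) (hy : 3 * t ≤ y.support.card) :
    ∃ g : Perm α, t ≤ ⁅g * x * g⁻¹, y⁆.support.card := by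
  have hα : x.support.card ≤ Fintype.card α := Finset.card_le_univ _
  obtain ⟨a, ha⟩ := x.exists_embedding_apply_ne (ι := Fin t ⊕ Fin t) (by simp; omega)
  obtain ⟨b, hb⟩ := y.exists_embedding_apply_ne (ι := Fin t) (by simpa using hy)
  set S₀ := Finset.univ.image b ∪ Finset.univ.image (y ∘ b)
  have hS₀ : S₀.card ≤ 2 * t := by
    grw [Finset.card_union_le, Finset.card_image_le, Finset.card_image_le]
    simp; omega
  obtain ⟨c, hc⟩ := S₀ᶜ.exists_embedding_forall_mem (ι := Fin t)
    (by rw [Finset.card_compl]; simp; omega)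
  set S₁ := S₀ ∪ Finset.univ.image c ∪ Finset.univ.image (y ∘ c)
  have hS₁ : S₁.card ≤ 4 * t := by
    grw [Finset.card_union_le, Finset.card_union_le, Finset.card_image_le, Finset.card_image_le]
    simp; omega
  obtain ⟨d, hd⟩ := S₁ᶜ.exists_embedding_forall_mem (ι := Fin t)
    (by rw [Finset.card_compl]; simp; omega)
  simp only [Finset.mem_compl] at hc hd
  have hsrc : Function.Injective (Sum.elim b (y ∘ b)) :=
    b.injective.sumElim (y.injective.comp b.injective) fun i j h => hb j i h.symm
  have htgt : Function.Injective (Sum.elim c d) :=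
    c.injective.sumElim d.injective fun i j h => hd j (by simp [S₁, ← h])
  have hst : ∀ i j, Sum.elim b (y ∘ b) i ≠ Sum.elim c d j := by
    simp only [Sum.forall, Sum.elim_inl, Sum.elim_inr, Function.comp_apply]
    refine ⟨fun i => ⟨fun j h => hc j ?_, fun j h => hd j ?_⟩,
      fun i => ⟨fun j h => hc j ?_, fun j h => hd j ?_⟩⟩ <;> simp [S₁, S₀, ← h]
  obtain ⟨g, hg⟩ := exists_conj_apply_eq x a.injective (fun i j => ha i j) hsrc htgt hst
  refine ⟨g, ?_⟩
  simpa using card_le_card_support_commutator _ y b.injective fun i => by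
    rw [show (g * x * g⁻¹) (y (b i)) = d i from hg (.inr i),
      show (g * x * g⁻¹) (b i) = c i from hg (.inl i)]
    exact fun h => hd i (by simp [S₁, h])

end Equiv.Perm

lemma MulEquiv.mapSubgroup_eq_of_codisjoint_of_disjoint {G H : Type*} [Group G] [Group H]
    (f : G ≃* H) {A B : Subgroup G} [B.Normal] {A' B' : Subgroup H} (hAB : Codisjoint A B)
    (hAB' : Disjoint A' B') (hA : f.mapSubgroup A ≤ A') (hB : f.mapSubgroup B ≤ B') :
    f.mapSubgroup A = A' := by
  refine le_antisymm hA fun h hh => ?_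
  have hsup : f.symm h ∈ ((A ⊔ B : Subgroup G) : Set G) := by rw [hAB.eq_top]; trivial
  rw [Subgroup.mul_normal] at hsup
  obtain ⟨a, ha, b, hb, hab⟩ := Set.mem_mul.mp hsup
  have hfab : f a * f b = h := by rw [← map_mul, hab, f.apply_symm_apply]
  have hfb : f b ∈ A' ⊓ B' := by
    refine ⟨?_, hB ⟨b, hb, rfl⟩⟩
    rw [← inv_mul_cancel_left (f a) (f b), hfab]
    exact A'.mul_mem (A'.inv_mem (hA ⟨a, ha, rfl⟩)) hh
  rw [hAB'.eq_bot, Subgroup.mem_bot] at hfb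
  exact ⟨a, ha, by rw [← hfab, hfb, mul_one]; rfl⟩

section Filters

open scoped Topology

lemma limsup_eq_zero_iff_tendsto {α : Type*} {F : Filter α} [F.NeBot] {f : α → ℝ} {C : ℝ}
    (h0 : ∀ x, 0 ≤ f x) (hC : ∀ x, f x ≤ C) : limsup f F = 0 ↔ Tendsto f F (𝓝 0) := by
  have hbdd : IsBoundedUnder (· ≤ ·) F f := isBoundedUnder_of ⟨C, hC⟩
  have hbdd' : IsBoundedUnder (· ≥ ·) F f := isBoundedUnder_of ⟨0, h0⟩
  refine ⟨fun h => tendsto_of_le_liminf_of_limsup_le ?_ h.le hbdd hbdd', Tendsto.limsup_eq⟩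
  exact le_liminf_of_le hbdd.isCoboundedUnder_ge (Eventually.of_forall h0)

lemma tendsto_inf_principal_nhds_zero_iff {f : ℕ → ℝ} (hf : ∀ n, 0 ≤ f n) {S : Set ℕ} :
    Tendsto f (atTop ⊓ 𝓟 S) (𝓝 0) ↔ ∀ ε > 0, {n ∈ S | ε ≤ f n}.Finite := by
  simp only [Metric.tendsto_nhds, Real.dist_0_eq_abs, abs_of_nonneg (hf _),
    eventually_inf_principal, ← Nat.cofinite_eq_atTop, eventually_cofinite, Classical.not_imp,
    not_lt]

lemma finite_setOf_lt_of_tendsto {k : ℕ → ℕ} (hk : Tendsto k atTop atTop) (c : ℕ) :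
    {n | k n < c}.Finite := by
  simpa [← Nat.cofinite_eq_atTop] using hk.eventually_ge_atTop c

end Filters

namespace SymPaper

open scoped commutatorElement Topology

section Hamming

variable {N : ℕ}

lemma hd_le_one (σ τ : Perm (Fin N)) : hd σ τ ≤ 1 := by
  unfold hd
  rcases (Nat.cast_nonneg N : (0 : ℝ) ≤ N).eq_or_lt with h | h
  · simp [← h]
  · rw [div_le_one h]
    exact_mod_cast (Finset.card_le_univ _).trans_eq (Finset.card_fin N)

lemma hd_eq_hd_inv_mul_one (σ τ : Perm (Fin N)) : hd σ τ = hd (σ⁻¹ * τ) 1 := by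
  rw [hd_one, hd, hd_filter_eq_support]

lemma hd_finRotate (h2 : 2 ≤ N) : hd (finRotate N) 1 = 1 := by
  rw [hd_one, support_finRotate_of_le h2, Finset.card_univ, Fintype.card_fin,
    div_self (by positivity)]

lemma exists_conj_hd_commutator_ge (x y : Perm (Fin N)) :
    ∃ g : Perm (Fin N), min (hd x 1) (hd y 1) / 6 - 1 / N ≤ hd ⁅g * x * g⁻¹, y⁆ 1 := by
  rcases Nat.eq_zero_or_pos N with rfl | hN
  · exact ⟨1, by simp [hd]⟩
  have hN' : (0 : ℝ) < N := by exact_mod_cast hN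
  set δ := min (hd x 1) (hd y 1)
  have hδ : 0 ≤ δ := le_min (hd_nonneg _ _) (hd_nonneg _ _)
  have hx : δ * N ≤ x.support.card := by
    rw [← le_div_iff₀ hN', ← hd_one]; exact min_le_left _ _
  have hy : δ * N ≤ y.support.card := by
    rw [← le_div_iff₀ hN', ← hd_one]; exact min_le_right _ _
  set t := ⌊δ * N / 6⌋₊
  have ht : (t : ℝ) ≤ δ * N / 6 := Nat.floor_le (by positivity)
  obtain ⟨g, hg⟩ := x.exists_conj_card_support_commutator_ge y (t := t)
    (by exact_mod_cast (by linarith : (6 * t : ℝ) ≤ x.support.card))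
    (by exact_mod_cast (by linarith : (3 * t : ℝ) ≤ y.support.card))
  refine ⟨g, ?_⟩
  rw [hd_one, le_div_iff₀ hN']
  have : δ * N / 6 < t + 1 := Nat.lt_floor_add_one _
  have : (t : ℝ) ≤ ⁅g * x * g⁻¹, y⁆.support.card := by exact_mod_cast hg
  field_simp
  linarith

end Hamming

section NullSubgroups

variable {k : ℕ → ℕ}

lemma mkRP_surjective : Function.Surjective (mkRP (k := k)) := QuotientGroup.mk_surjective

lemma mkRP_mul (a b : ∀ n, Perm (Fin (k n))) : mkRP (a * b) = mkRP a * mkRP b := rfl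

lemma mkRP_inv (a : ∀ n, Perm (Fin (k n))) : mkRP a⁻¹ = (mkRP a)⁻¹ := rfl

lemma mkRP_eq_one_iff {a : ∀ n, Perm (Fin (k n))} :
    mkRP a = 1 ↔ Tendsto (fun n => hd (a n) 1) atTop (𝓝 0) :=
  QuotientGroup.eq_one_iff a

variable (k) in
def nullOn (S : Set ℕ) : Subgroup (SymRP k) :=
  (symNull k (atTop ⊓ 𝓟 S)).map (QuotientGroup.mk' _)

instance (S : Set ℕ) : (nullOn k S).Normal :=
  (symNull_normal _ _).map _ (QuotientGroup.mk'_surjective _)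

lemma mkRP_mem_nullOn {S : Set ℕ} {a : ∀ n, Perm (Fin (k n))} :
    mkRP a ∈ nullOn k S ↔ Tendsto (fun n => hd (a n) 1) (atTop ⊓ 𝓟 S) (𝓝 0) := by
  change QuotientGroup.mk' _ a ∈ (symNull k _).map _ ↔ _
  rw [← Subgroup.mem_comap, Subgroup.comap_map_eq_self]
  · rfl
  · rw [QuotientGroup.ker_mk']
    exact fun b hb => Tendsto.mono_left hb inf_le_left

lemma mkRP_mem_nullOn_iff_finite {S : Set ℕ} {a : ∀ n, Perm (Fin (k n))} :
    mkRP a ∈ nullOn k S ↔ ∀ ε > 0, {n ∈ S | ε ≤ hd (a n) 1}.Finite := by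
  rw [mkRP_mem_nullOn, tendsto_inf_principal_nhds_zero_iff fun n => hd_nonneg _ _]

lemma mkRP_mem_nullOn_of_eqOn {S : Set ℕ} {a : ∀ n, Perm (Fin (k n))}
    (h : ∀ n ∈ S, a n = 1) : mkRP a ∈ nullOn k S :=
  mkRP_mem_nullOn_iff_finite.mpr fun ε hε => Set.finite_empty.subset
    fun n ⟨hn, hεn⟩ => by rw [h n hn, hd_self] at hεn; exact (hε.not_ge hεn).elim

lemma nullOn_anti {S T : Set ℕ} (h : ∀ᶠ n in atTop, n ∈ T → n ∈ S) :
    nullOn k S ≤ nullOn k T :=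
  Subgroup.map_mono fun _ ha => Tendsto.mono_left ha
    (le_inf inf_le_left (le_principal_iff.mpr (mem_inf_principal.mpr h)))

lemma nullOn_congr {S T : Set ℕ} (h : (symmDiff S T).Finite) : nullOn k S = nullOn k T := by
  have hev : ∀ᶠ n in atTop, n ∉ symmDiff S T := by
    rw [← Nat.cofinite_eq_atTop]; exact h.eventually_cofinite_notMem
  refine le_antisymm (nullOn_anti ?_) (nullOn_anti ?_) <;>
    filter_upwards [hev] with n hn <;> simp_all [Set.mem_symmDiff]

lemma nullOn_union (S T : Set ℕ) : nullOn k (S ∪ T) = nullOn k S ⊓ nullOn k T := by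
  ext x
  obtain ⟨a, rfl⟩ := mkRP_surjective x
  simp only [Subgroup.mem_inf, mkRP_mem_nullOn, ← sup_principal, inf_sup_left, tendsto_sup]

lemma nullOn_univ : nullOn k univ = ⊥ := by
  ext x
  obtain ⟨a, rfl⟩ := mkRP_surjective x
  rw [mkRP_mem_nullOn, principal_univ, inf_top_eq, Subgroup.mem_bot, mkRP_eq_one_iff]

lemma nullOn_of_finite {S : Set ℕ} (hS : S.Finite) : nullOn k S = ⊤ := by
  refine eq_top_iff.mpr fun x _ => ?_
  obtain ⟨a, rfl⟩ := mkRP_surjective x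
  exact mkRP_mem_nullOn_iff_finite.mpr fun _ _ => hS.subset fun _ hn => hn.1

lemma isCompl_nullOn_compl (S : Set ℕ) : IsCompl (nullOn k S) (nullOn k Sᶜ) := by
  classical
  refine ⟨disjoint_iff.mpr ?_, codisjoint_iff.mpr (eq_top_iff.mpr fun x _ => ?_)⟩
  · rw [← nullOn_union, union_compl_self, nullOn_univ]
  obtain ⟨a, rfl⟩ := mkRP_surjective x
  have hsplit : a = S.piecewise 1 a * S.piecewise a 1 := by
    funext n
    by_cases hn : n ∈ S <;> simp [hn]
  rw [hsplit, mkRP_mul]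
  exact Subgroup.mul_mem_sup
    (mkRP_mem_nullOn_of_eqOn fun n hn => by simp [hn])
    (mkRP_mem_nullOn_of_eqOn fun n hn => by simp [Set.notMem_of_mem_compl hn])

/-- A sequence of full cycles along the infinite set `S \ T` is null along `T` but not along `S`. -/
lemma finite_diff_of_nullOn_le (hk : Tendsto k atTop atTop) {S T : Set ℕ}
    (h : nullOn k T ≤ nullOn k S) : (S \ T).Finite := by
  classical
  set r : ∀ n, Perm (Fin (k n)) := (S \ T).piecewise (fun n => finRotate (k n)) 1
  have hr : mkRP r ∈ nullOn k T := mkRP_mem_nullOn_of_eqOn fun n hn => by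
    simp [r, hn]
  refine ((mkRP_mem_nullOn_iff_finite.mp (h hr) 1 one_pos).union
    (finite_setOf_lt_of_tendsto hk 2)).subset fun n hn => ?_
  by_cases hkn : 2 ≤ k n
  · exact .inl ⟨hn.1, by simp [r, hn, hd_finRotate hkn]⟩
  · exact .inr (not_le.mp hkn)

lemma limsupOn_hd_eq_zero_iff {S : Set ℕ} (hS : S.Infinite) (a b : ∀ n, Perm (Fin (k n))) :
    limsupOn S (fun n => hd (a n) (b n)) = 0 ↔ mkRP (a⁻¹ * b) ∈ nullOn k S := by
  have : (atTop ⊓ 𝓟 S).NeBot := by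
    rw [← Nat.cofinite_eq_atTop]; exact hS.cofinite_inf_principal_neBot
  rw [limsupOn, limsup_eq_zero_iff_tendsto (fun _ => hd_nonneg _ _) (fun _ => hd_le_one _ _),
    mkRP_mem_nullOn]
  simp only [hd_eq_hd_inv_mul_one (a _), Pi.mul_apply, Pi.inv_apply]

end NullSubgroups

section Dichotomy

variable {k l : ℕ → ℕ}

/-- Otherwise conjugating `x` coordinatewise as in `exists_conj_hd_commutator_ge` gives a
commutator that is not null. -/
lemma finite_setOf_le_hd_of_forall_commute_conj (hl : Tendsto l atTop atTop)
    {x y : ∀ n, Perm (Fin (l n))} (h : ∀ g : SymRP l, Commute (g * mkRP x * g⁻¹) (mkRP y))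
    {δ : ℝ} (hδ : 0 < δ) : {n | δ ≤ hd (x n) 1 ∧ δ ≤ hd (y n) 1}.Finite := by
  choose g hg using fun n => exists_conj_hd_commutator_ge (x n) (y n)
  have hZ : Tendsto (fun n => hd ⁅g n * x n * (g n)⁻¹, y n⁆ 1) atTop (𝓝 0) :=
    mkRP_eq_one_iff.mp (commutatorElement_eq_one_iff_commute.mpr (h (mkRP g)))
  rw [← inf_top_eq atTop, ← principal_univ,
    tendsto_inf_principal_nhds_zero_iff fun _ => hd_nonneg _ _] at hZ
  refine ((hZ (δ / 12) (by positivity)).union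
    (finite_setOf_lt_of_tendsto hl ⌈12 / δ⌉₊)).subset fun n ⟨hx, hy⟩ => ?_
  by_cases hln : ⌈12 / δ⌉₊ ≤ l n
  · have hl' : 12 / δ ≤ l n := (Nat.le_ceil _).trans (by exact_mod_cast hln)
    have hlpos : (0 : ℝ) < l n := (by positivity : (0 : ℝ) < 12 / δ).trans_le hl'
    have h1l : 1 / (l n : ℝ) ≤ δ / 12 := by
      rw [div_le_div_iff₀ hlpos (by norm_num)]
      nlinarith [(div_le_iff₀ hδ).mp hl']
    exact .inl ⟨trivial, by linarith [hg n, le_min hx hy]⟩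
  · exact .inr (not_le.mp hln)

lemma mkRP_mem_nullOn_of_forall_commute_conj (hl : Tendsto l atTop atTop)
    {x y : ∀ n, Perm (Fin (l n))} (h : ∀ g : SymRP l, Commute (g * mkRP x * g⁻¹) (mkRP y))
    {ε : ℝ} (hε : 0 < ε) : mkRP x ∈ nullOn l {n | ε ≤ hd (y n) 1} :=
  mkRP_mem_nullOn_iff_finite.mpr fun _ hδ =>
    (finite_setOf_le_hd_of_forall_commute_conj hl h (lt_min hδ hε)).subset
      fun _ ⟨hy, hx⟩ => ⟨(min_le_left _ _).trans hx, (min_le_right _ _).trans hy⟩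

lemma commute_conj_map_of_mem_nullOn (φ : SymRP k ≃* SymRP l) {S : Set ℕ} {p q : SymRP k}
    (hp : p ∈ nullOn k S) (hq : q ∈ nullOn k Sᶜ) (g : SymRP l) :
    Commute (g * φ p * g⁻¹) (φ q) := by
  obtain ⟨u, rfl⟩ := φ.surjective g
  rw [← map_inv, ← map_mul, ← map_mul]
  exact (Subgroup.commute_of_normal_of_disjoint _ _ inferInstance inferInstance
    (isCompl_nullOn_compl S).disjoint _ _ (Subgroup.Normal.conj_mem inferInstance p hp u) hq).map φ

lemma mapSubgroup_nullOn_le (hl : Tendsto l atTop atTop) (φ : SymRP k ≃* SymRP l)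
    {S : Set ℕ} {q : SymRP k} (hq : q ∈ nullOn k Sᶜ) {q' : ∀ n, Perm (Fin (l n))}
    (hq' : φ q = mkRP q') {ε : ℝ} (hε : 0 < ε) :
    φ.mapSubgroup (nullOn k S) ≤ nullOn l {n | ε ≤ hd (q' n) 1} := by
  rintro _ ⟨p, hp, rfl⟩
  obtain ⟨p', hp'⟩ := mkRP_surjective (φ p)
  change φ p ∈ _
  rw [← hp']
  refine mkRP_mem_nullOn_of_forall_commute_conj hl (fun g => ?_) hε
  rw [← hq', hp']
  exact commute_conj_map_of_mem_nullOn φ hp hq g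

lemma eventually_le_hd_or_le_hd_of_mkRP_mul_eq (hl : Tendsto l atTop atTop)
    {x y : ∀ n, Perm (Fin (l n))} (h : mkRP (x * y) = mkRP fun n => finRotate (l n)) :
    ∀ᶠ n in atTop, 1 / 3 ≤ hd (x n) 1 ∨ 1 / 3 ≤ hd (y n) 1 := by
  set r := (x * y)⁻¹ * fun n => finRotate (l n)
  have hr : Tendsto (fun n => hd (r n) 1) atTop (𝓝 0) := by
    rw [← mkRP_eq_one_iff, mkRP_mul, mkRP_inv, h, inv_mul_cancel]
  filter_upwards [hr.eventually_lt_const (by norm_num : (0 : ℝ) < 1 / 3),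
    hl.eventually_ge_atTop 2] with n hrn hln
  have : 1 ≤ hd (x n) 1 + hd (y n) 1 + hd (r n) 1 := calc
    1 = hd (x n * y n * r n) 1 := by simp [r, mul_assoc, hd_finRotate hln]
    _ ≤ hd (x n) 1 + hd (y n) 1 + hd (r n) 1 :=
      (hd_mul_one_le _ _).trans (add_le_add_left (hd_mul_one_le _ _) _)
  by_contra! h
  linarith [h.1, h.2]

/-- Split a preimage of a sequence of full cycles as `p * q` with `q` null along `Sᶜ`; then `T` is
where the image of `q` is far from the identity. -/
lemma exists_mapSubgroup_nullOn_eq (hl : Tendsto l atTop atTop) (φ : SymRP k ≃* SymRP l)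
    (S : Set ℕ) : ∃ T : Set ℕ, φ.mapSubgroup (nullOn k S) = nullOn l T ∧
      φ.mapSubgroup (nullOn k Sᶜ) = nullOn l Tᶜ := by
  set c : ∀ n, Perm (Fin (l n)) := fun n => finRotate (l n)
  have hsup : φ.symm (mkRP c) ∈ ((nullOn k S ⊔ nullOn k Sᶜ : Subgroup _) : Set (SymRP k)) := by
    rw [(isCompl_nullOn_compl S).sup_eq_top]; trivial
  rw [Subgroup.mul_normal] at hsup
  obtain ⟨p, hp, q, hq, hpq⟩ := Set.mem_mul.mp hsup
  obtain ⟨p', hp'⟩ := mkRP_surjective (φ p)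
  obtain ⟨q', hq'⟩ := mkRP_surjective (φ q)
  have hlarge := eventually_le_hd_or_le_hd_of_mkRP_mul_eq hl (x := p') (y := q')
    (by rw [mkRP_mul, hp', hq', ← map_mul, hpq, φ.apply_symm_apply])
  have hS := mapSubgroup_nullOn_le hl φ hq hq'.symm (ε := 1 / 3) (by norm_num)
  have hSc : φ.mapSubgroup (nullOn k Sᶜ) ≤ nullOn l {n | 1 / 3 ≤ hd (q' n) 1}ᶜ :=
    (mapSubgroup_nullOn_le hl φ (S := Sᶜ) (by rwa [compl_compl]) hp'.symm (by norm_num)).trans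
      (nullOn_anti (hlarge.mono fun n hn hnT => hn.resolve_right hnT))
  exact ⟨_, φ.mapSubgroup_eq_of_codisjoint_of_disjoint (isCompl_nullOn_compl S).codisjoint
      (isCompl_nullOn_compl _).disjoint hS hSc,
    φ.mapSubgroup_eq_of_codisjoint_of_disjoint (isCompl_nullOn_compl S).symm.codisjoint
      (isCompl_nullOn_compl _).symm.disjoint hSc hS⟩

end Dichotomy

section BooleanAlgebra

variable {k l : ℕ → ℕ}

lemma infinite_of_mapSubgroup_nullOn_eq (hk : Tendsto k atTop atTop) (φ : SymRP k ≃* SymRP l)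
    {S T : Set ℕ} (h : φ.mapSubgroup (nullOn k S) = nullOn l T) (hS : S.Infinite) :
    T.Infinite := fun hT => hS <| by
  have htop : nullOn k S = ⊤ := by rw [← map_eq_top_iff φ.mapSubgroup, h, nullOn_of_finite hT]
  simpa using finite_diff_of_nullOn_le hk (T := ∅) (by simp [htop])

lemma limsupOn_hd_eq_zero_iff_of_mapSubgroup_nullOn_eq (φ : SymRP k ≃* SymRP l) {S T : Set ℕ}
    (h : φ.mapSubgroup (nullOn k S) = nullOn l T) (hS : S.Infinite) (hT : T.Infinite)
    {a b : ∀ n, Perm (Fin (k n))} {a' b' : ∀ n, Perm (Fin (l n))}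
    (ha : φ (mkRP a) = mkRP a') (hb : φ (mkRP b) = mkRP b') :
    limsupOn S (fun n => hd (a n) (b n)) = 0 ↔ limsupOn T (fun n => hd (a' n) (b' n)) = 0 := by
  have hab : φ (mkRP (a⁻¹ * b)) = mkRP (a'⁻¹ * b') := by
    rw [mkRP_mul, mkRP_inv, map_mul, map_inv, ha, hb, mkRP_mul, mkRP_inv]
  rw [limsupOn_hd_eq_zero_iff hS, limsupOn_hd_eq_zero_iff hT, ← hab, ← h,
    MulEquiv.mapSubgroup_apply]
  exact (Subgroup.mem_map_iff_mem (f := (φ : SymRP k →* SymRP l)) φ.injective).symm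

variable (k) in
def nullClass : PFin → Subgroup (SymRP k) :=
  Quotient.lift (nullOn k) fun _ _ => nullOn_congr

lemma nullClass_mk (S : Set ℕ) : nullClass k (PFin.mk S) = nullOn k S := rfl

lemma nullClass_sup (x y : PFin) :
    nullClass k (PFin.sup x y) = nullClass k x ⊓ nullClass k y :=
  Quotient.inductionOn₂ x y nullOn_union

lemma nullClass_injective (hk : Tendsto k atTop atTop) : Function.Injective (nullClass k) :=
  Quotient.ind₂ fun _ _ h => Quotient.sound <|
    (finite_diff_of_nullOn_le hk h.ge).union (finite_diff_of_nullOn_le hk h.le)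

lemma exists_mapSubgroup_nullClass_eq (hl : Tendsto l atTop atTop) (φ : SymRP k ≃* SymRP l)
    (x : PFin) : ∃ y : PFin, φ.mapSubgroup (nullClass k x) = nullClass l y ∧
      φ.mapSubgroup (nullClass k (PFin.compl x)) = nullClass l (PFin.compl y) :=
  Quotient.inductionOn x fun S =>
    let ⟨T, hT⟩ := exists_mapSubgroup_nullOn_eq hl φ S
    ⟨PFin.mk T, hT⟩

end BooleanAlgebra

/-- every isomorphism between metric reduced products of symmetric groups induces
an automorphism `Θ` of `P(ℕ)/Fin` respecting the relations `=_S`. -/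
theorem iso_induces_boolean_automorphism (k l : ℕ → ℕ)
    (hk : Tendsto k atTop atTop) (hl : Tendsto l atTop atTop)
    (φ : SymRP k ≃* SymRP l) :
    ∃ Θ : PFin ≃ PFin,
      (∀ x y : PFin, Θ (PFin.sup x y) = PFin.sup (Θ x) (Θ y)) ∧
      (∀ x : PFin, Θ (PFin.compl x) = PFin.compl (Θ x)) ∧
      (∀ S T : Set ℕ, S.Infinite → Θ (PFin.mk S) = PFin.mk T → T.Infinite) ∧
      (∀ (a b : ∀ n, Equiv.Perm (Fin (k n))) (a' b' : ∀ n, Equiv.Perm (Fin (l n))),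
        φ (mkRP a) = mkRP a' → φ (mkRP b) = mkRP b' →
        ∀ S : Set ℕ, S.Infinite → ∀ T : Set ℕ, Θ (PFin.mk S) = PFin.mk T →
          (limsupOn S (fun n => hd (a n) (b n)) = 0 ↔
            limsupOn T (fun n => hd (a' n) (b' n)) = 0)) := by
  choose χ hχ hχc using exists_mapSubgroup_nullClass_eq hl φ
  choose ψ hψ _ using exists_mapSubgroup_nullClass_eq hk φ.symm
  let Θ : PFin ≃ PFin :=
    { toFun := χ
      invFun := ψ
      left_inv := fun x => nullClass_injective hk <| by
        rw [← hψ, ← hχ, ← MulEquiv.symm_mapSubgroup, OrderIso.symm_apply_apply]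
      right_inv := fun y => nullClass_injective hl <| by
        rw [← hχ, ← hψ, ← MulEquiv.symm_mapSubgroup, OrderIso.apply_symm_apply] }
  have hΘ : ∀ x, nullClass l (Θ x) = φ.mapSubgroup (nullClass k x) := fun x => (hχ x).symm
  have hmk : ∀ S T, Θ (PFin.mk S) = PFin.mk T → φ.mapSubgroup (nullOn k S) = nullOn l T :=
    fun S T hST => by rw [← nullClass_mk, ← nullClass_mk, ← hΘ, hST]
  have hinf : ∀ S T : Set ℕ, S.Infinite → Θ (PFin.mk S) = PFin.mk T → T.Infinite :=
    fun S T hS hST => infinite_of_mapSubgroup_nullOn_eq hk φ (hmk S T hST) hS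
  refine ⟨Θ, fun x y => nullClass_injective hl ?_, fun x => nullClass_injective hl ?_, hinf,
    fun a b a' b' ha hb S hS T hST =>
      limsupOn_hd_eq_zero_iff_of_mapSubgroup_nullOn_eq φ (hmk S T hST) hS
        (hinf S T hS hST) ha hb⟩
  · rw [hΘ, nullClass_sup, nullClass_sup, OrderIso.map_inf, hΘ, hΘ]
  · rw [hΘ, hχc]
    rfl

end SymPaper
end

section
/- Let (k_n)_n be a sequence of natural numbers with lim_n k_n = ∞. Then the following are equivalent: (1) every almost permutation f of ℕ with lim_n k_{f(n)}/k_n = 1 agrees with the identity on a cofinite subset of ℕ (i.e., (k_n)_n has no nontrivial asymptotically equivalent almost rearrangements); (2) there exist ε > 0 and N ∈ ℕ such that |log k_n − log k_m| ≥ ε for all n ≠ m with n, m ≥ N (i.e., liminf_{n ≠ m} |log k_n − log k_m| > 0). -/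
open Filter Equiv Set

theorem tendsto_cofinite_sum_iff {α β γ : Type*} {f : α ⊕ β → γ} {l : Filter γ} :
    Tendsto f cofinite l ↔
      Tendsto (f ∘ Sum.inl) cofinite l ∧ Tendsto (f ∘ Sum.inr) cofinite l := by
  simp only [tendsto_iff_forall_eventually_mem, eventually_cofinite, ← forall_and,
    ← Set.finite_preimage_inl_and_inr]
  rfl

theorem Set.InjOn.tendsto_cofinite {α β : Type*} {f : α → β} {S : Set α} (hf : InjOn f S)
    (hS : Sᶜ.Finite) : Tendsto f cofinite cofinite := by
  intro T hT
  have hfin : (f ⁻¹' Tᶜ ∩ S).Finite :=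
    Finite.of_finite_image ((mem_cofinite.1 hT).subset
      ((image_mono inter_subset_left).trans (image_preimage_subset _ _)))
      (hf.mono inter_subset_right)
  refine mem_cofinite.2 ((hfin.union hS).subset fun x hx => ?_)
  by_cases hxS : x ∈ S <;> simp_all

theorem tendsto_div_nhds_one_iff_tendsto_dist_log {α : Type*} {l : Filter α} {u v : α → ℝ}
    (hu : ∀ᶠ x in l, 0 < u x) (hv : ∀ᶠ x in l, 0 < v x) :
    Tendsto (fun x => u x / v x) l (nhds 1) ↔
      Tendsto (fun x => dist (Real.log (u x)) (Real.log (v x))) l (nhds 0) := by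
  have hexp : (fun x => u x / v x) =ᶠ[l] fun x => Real.exp (Real.log (u x) - Real.log (v x)) := by
    filter_upwards [hu, hv] with x hux hvx
    rw [Real.exp_sub, Real.exp_log hux, Real.exp_log hvx]
  have hdist : Tendsto (fun x => dist (Real.log (u x)) (Real.log (v x))) l (nhds 0) ↔
      Tendsto (fun x => Real.log (u x) - Real.log (v x)) l (nhds 0) := by
    rw [tendsto_iff_norm_sub_tendsto_zero (f := fun x => Real.log (u x) - Real.log (v x))]
    simp only [sub_zero, Real.norm_eq_abs, Real.dist_eq]
  rw [tendsto_congr' hexp, hdist]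
  constructor
  · intro h
    simpa [Function.comp_def] using (Real.continuousAt_log one_ne_zero).tendsto.comp h
  · intro h
    simpa [Function.comp_def] using (Real.continuous_exp.tendsto 0).comp h

theorem Equiv.Perm.tendsto_dist_extendDomain {ι α β : Type*} [PseudoMetricSpace β]
    {p : α → Prop} [DecidablePred p] (σ : Perm ι) (e : ι ≃ Subtype p) (g : α → β)
    (h : Tendsto (fun j => dist (g (e (σ j))) (g (e j))) cofinite (nhds 0)) :
    Tendsto (fun x => dist (g (σ.extendDomain e x)) (g x)) cofinite (nhds 0) := by
  rw [Metric.tendsto_nhds] at h ⊢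
  intro ε hε
  refine ((h ε hε).image fun j => (e j : α)).subset fun x hx => ?_
  by_cases hpx : p x
  · obtain ⟨j, rfl⟩ : ∃ j, (e j : α) = x := ⟨e.symm ⟨x, hpx⟩, by simp⟩
    exact ⟨j, by simpa [Perm.extendDomain_apply_image] using hx, rfl⟩
  · simp [Perm.extendDomain_apply_not_subtype σ e hpx, hε] at hx

theorem exists_injective_sumElim_of_forall_exists {P : ℕ → ℕ → ℕ → Prop}
    (h : ∀ i N, ∃ m n, N ≤ m ∧ m < n ∧ P i m n) :
    ∃ a b : ℕ → ℕ, Function.Injective (Sum.elim a b) ∧ ∀ i, P i (a i) (b i) := by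
  choose lo hi hlo hlohi hP using h
  -- the `i`-th pair is taken beyond the threshold `t i`, which exceeds every earlier pair
  let t : ℕ → ℕ := fun i => Nat.rec 0 (fun i ti => hi i ti + 1) i
  let a : ℕ → ℕ := fun i => lo i (t i)
  let b : ℕ → ℕ := fun i => hi i (t i)
  have hab : ∀ i, a i < b i := fun i => hlohi i (t i)
  have hba : ∀ i, b i < a (i + 1) := fun i => hlo (i + 1) (t (i + 1))
  have ha : StrictMono a := strictMono_nat_of_lt_succ fun i => (hab i).trans (hba i)
  have hb : StrictMono b := strictMono_nat_of_lt_succ fun i => (hba i).trans (hab (i + 1))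
  refine ⟨a, b, ha.injective.sumElim hb.injective fun i j => ?_, fun i => hP i (t i)⟩
  rcases lt_or_ge j i with hji | hij
  · exact ((hba j).trans_le (ha.monotone hji)).ne'
  · exact ((ha.monotone hij).trans_lt (hab j)).ne

section Separation

variable {β : Type*} [PseudoMetricSpace β]

/-- `liminf_{n ≠ m} dist (g n) (g m) > 0`. -/
def EventuallySeparated (g : ℕ → β) : Prop :=
  ∃ ε : ℝ, 0 < ε ∧ ∃ N : ℕ, ∀ m n : ℕ, N ≤ m → N ≤ n → m ≠ n → ε ≤ dist (g n) (g m)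

theorem EventuallySeparated.eventually_eq {g : ℕ → β} (hg : EventuallySeparated g) {f : ℕ → ℕ}
    (hf : Tendsto f atTop atTop) (hfg : Tendsto (fun n => dist (g (f n)) (g n)) atTop (nhds 0)) :
    ∀ᶠ n in atTop, f n = n := by
  obtain ⟨ε, hε, N, hN⟩ := hg
  filter_upwards [hf.eventually_ge_atTop N, eventually_ge_atTop N,
    hfg.eventually (gt_mem_nhds hε)] with n hfn hn hclose
  by_contra hne
  exact (hN n (f n) hn hfn (Ne.symm hne)).not_gt hclose

theorem exists_injective_sumElim_of_not_eventuallySeparated {g : ℕ → β}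
    (hg : ¬EventuallySeparated g) :
    ∃ a b : ℕ → ℕ, Function.Injective (Sum.elim a b) ∧
      Tendsto (fun i => dist (g (a i)) (g (b i))) atTop (nhds 0) := by
  have hpairs : ∀ i N : ℕ, ∃ m n, N ≤ m ∧ m < n ∧ dist (g m) (g n) < 1 / ((i : ℝ) + 1) := by
    intro i N
    unfold EventuallySeparated at hg
    push Not at hg
    obtain ⟨m, n, hm, hn, hne, hclose⟩ := hg _ Nat.one_div_pos_of_nat N
    rcases hne.lt_or_gt with hmn | hnm
    · exact ⟨m, n, hm, hmn, by rwa [dist_comm]⟩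
    · exact ⟨n, m, hn, hnm, hclose⟩
  obtain ⟨a, b, hab, hclose⟩ := exists_injective_sumElim_of_forall_exists hpairs
  exact ⟨a, b, hab, squeeze_zero (fun _ => dist_nonneg) (fun i => (hclose i).le)
    tendsto_one_div_add_atTop_nhds_zero_nat⟩

theorem exists_perm_tendsto_dist_of_not_eventuallySeparated {g : ℕ → β}
    (hg : ¬EventuallySeparated g) :
    ∃ σ : Perm ℕ, {n | σ n ≠ n}.Infinite ∧
      Tendsto (fun n => dist (g (σ n)) (g n)) atTop (nhds 0) := by
  classical
  obtain ⟨a, b, hab, hclose⟩ := exists_injective_sumElim_of_not_eventuallySeparated hg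
  let e := Equiv.ofInjective _ hab
  let σ : Perm ℕ := Perm.extendDomain (Equiv.sumComm ℕ ℕ) e
  have hσa : ∀ i, σ (a i) = b i := fun i => Perm.extendDomain_apply_image _ e (Sum.inl i)
  refine ⟨σ, ?_, ?_⟩
  · refine (Set.infinite_range_of_injective (hab.comp Sum.inl_injective)).mono ?_
    rintro _ ⟨i, rfl⟩
    simpa [hσa] using fun h => Sum.inl_ne_inr (hab h).symm
  · rw [← Nat.cofinite_eq_atTop]
    refine Perm.tendsto_dist_extendDomain _ e g (tendsto_cofinite_sum_iff.2 ⟨?_, ?_⟩) <;>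
      simpa [Function.comp_def, e, Nat.cofinite_eq_atTop, dist_comm] using hclose

end Separation

namespace SymPaper

theorem AlmostPerm.tendsto_atTop {f : ℕ → ℕ} (hf : AlmostPerm f) : Tendsto f atTop atTop := by
  obtain ⟨S, hS, hinj⟩ := hf.2
  exact Nat.cofinite_eq_atTop ▸ hinj.tendsto_cofinite hS

theorem almostPerm_perm (σ : Perm ℕ) : AlmostPerm σ :=
  ⟨by simp [σ.surjective.range_eq], Set.univ, by simp, σ.injective.injOn⟩

/-- `(kₙ)ₙ` has no nontrivial asymptotically equivalent almost rearrangement iff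
`liminf_{n ≠ m} |log kₙ - log kₘ| > 0`. -/
theorem no_nontrivial_rearrangement_iff_log_separated (k : ℕ → ℕ)
    (hk : Tendsto k atTop atTop) :
    (∀ f : ℕ → ℕ, AlmostPerm f →
        Tendsto (fun n => (k (f n) : ℝ) / k n) atTop (nhds 1) → {n | f n ≠ n}.Finite) ↔
      (∃ ε : ℝ, 0 < ε ∧ ∃ N : ℕ, ∀ m n : ℕ, N ≤ m → N ≤ n → m ≠ n →
        ε ≤ |Real.log (k n) - Real.log (k m)|) := by
  have hratio : ∀ f : ℕ → ℕ, Tendsto f atTop atTop →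
      (Tendsto (fun n => (k (f n) : ℝ) / k n) atTop (nhds 1) ↔
        Tendsto (fun n => dist (Real.log (k (f n))) (Real.log (k n))) atTop (nhds 0)) :=
    fun f hf => tendsto_div_nhds_one_iff_tendsto_dist_log
      (((hk.comp hf).eventually_gt_atTop 0).mono fun _ => Nat.cast_pos.2)
      ((hk.eventually_gt_atTop 0).mono fun _ => Nat.cast_pos.2)
  change _ ↔ EventuallySeparated fun n => Real.log (k n)
  constructor
  · intro hrigid
    by_contra hsep
    obtain ⟨σ, hmoved, hclose⟩ := exists_perm_tendsto_dist_of_not_eventuallySeparated hsep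
    exact hmoved (hrigid σ (almostPerm_perm σ)
      ((hratio σ σ.injective.nat_tendsto_atTop).2 hclose))
  · intro hsep f hf hf1
    have hfix := hsep.eventually_eq hf.tendsto_atTop ((hratio f hf.tendsto_atTop).1 hf1)
    rwa [← Nat.cofinite_eq_atTop, eventually_cofinite] at hfix

end SymPaper
end
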